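/- arXiv:2410.23798 — 2 statements merged into one kernel-verified Lean document; each statement's English description precedes it below -/
import Mathlib

section
/- Fix ν > 0, M > 0, γ₀, γ₁ ∈ (0,1), γ₂ ∈ (0,1), t ≥ 0, and let b = b(t,·) be the shear flow at time t. Let k ≠ 0 be a real number and let φ : ℝ → ℝ be a twice continuously differentiable function with φ, φ' ∈ L²(ℝ), φ(y) → 0 as y → ±∞, solving φ''(y) − q(y)·φ(y) = k²·φ(y) for all y ∈ ℝ, where q(y) = b''(y)/b(y) for y ≠ 0 and q(0) is the continuous extension of b''/b at y = 0. If φ(y₀) = 0 for some y₀ ∈ ℝ, then φ ≡ 0 on ℝ. In particular, any nonzero such solution (a neutral mode) has no zeros. -/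
open MeasureTheory Real Filter Set

noncomputable section

/-- The shear flow `b(t,y)` from the paper (eq. (1.6)/(2.1)):
`b(t,y) = y + M·(∫₀^y (γ₀²/√(4νt+γ₀²))·exp(−z²/(4νt+γ₀²)) dz
  − γ₂·∫₀^y (γ₀²γ₁³/√(4νt+γ₀²γ₁²))·exp(−z²/(4νt+γ₀²γ₁²)) dz)`. -/
def shearFlow (ν M γ₀ γ₁ γ₂ : ℝ) (t y : ℝ) : ℝ :=
  y + M * ((∫ z in (0:ℝ)..y, γ₀^2 / Real.sqrt (4*ν*t + γ₀^2) * Real.exp (-z^2 / (4*ν*t + γ₀^2)))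
    - γ₂ * ∫ z in (0:ℝ)..y, γ₀^2 * γ₁^3 / Real.sqrt (4*ν*t + γ₀^2*γ₁^2) *
        Real.exp (-z^2 / (4*ν*t + γ₀^2*γ₁^2)))

/-- The potential `q = b''/b`, extended continuously at `y = 0`
(where `b(0) = b''(0) = 0`). -/
def qExt (b : ℝ → ℝ) : ℝ → ℝ := fun y =>
  if y = 0 then limUnder (nhdsWithin 0 {(0:ℝ)}ᶜ) (fun z => deriv (deriv b) z / b z)
  else deriv (deriv b) y / b y

/-- The set of Rayleigh quotients `∫|φ'|² + ∫ (b''/b)·φ²` over normalized `φ ∈ H¹(ℝ)`. -/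
def lambdaSet (b : ℝ → ℝ) : Set ℝ :=
  { E | ∃ φ : ℝ → ℝ, Differentiable ℝ φ ∧ MemLp φ 2 (volume : Measure ℝ) ∧
      MemLp (deriv φ) 2 (volume : Measure ℝ) ∧ (∫ y : ℝ, (φ y)^2) = 1 ∧
      E = (∫ y : ℝ, (deriv φ y)^2) + ∫ y : ℝ, qExt b y * (φ y)^2 }

/-- `λ(M,t)`: the infimum of the Rayleigh quotient for the shear flow. -/
def lambdaVal (ν M γ₀ γ₁ γ₂ t : ℝ) : ℝ := sInf (lambdaSet (shearFlow ν M γ₀ γ₁ γ₂ t))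

/-- `c` is an eigenvalue of the Rayleigh operator `R_{b,k} = b·Id − b''·(∂_y² − k²)⁻¹`:
there are `ω ∈ L²(ℝ,ℂ)`, `ω ≠ 0`, and a `C²` stream function `ψ` with
`ψ, ψ', ψ'' ∈ L²`, such that `ψ'' − k²ψ = ω` everywhere and
`(b − c)·ω = b''·ψ` almost everywhere. -/
def IsRayleighEigenvalue (b : ℝ → ℝ) (k : ℝ) (c : ℂ) : Prop :=
  ∃ ω ψ : ℝ → ℂ,
    MemLp ω 2 (volume : Measure ℝ) ∧ ¬ (ω =ᵐ[(volume : Measure ℝ)] (0 : ℝ → ℂ)) ∧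
    ContDiff ℝ 2 ψ ∧ MemLp ψ 2 (volume : Measure ℝ) ∧
    MemLp (deriv ψ) 2 (volume : Measure ℝ) ∧ MemLp (deriv (deriv ψ)) 2 (volume : Measure ℝ) ∧
    (∀ y : ℝ, deriv (deriv ψ) y - (k:ℂ)^2 * ψ y = ω y) ∧
    (∀ᵐ y : ℝ ∂(volume : Measure ℝ),
      ((b y : ℂ) - c) * ω y = ((deriv (deriv b) y : ℝ) : ℂ) * ψ y)

/-!
Write `W = ψ' b - ψ b'` for the Wronskian of a mode `ψ` and the flow `b`. Since `q b = b''`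
everywhere (at `y = 0` because `b = b'' = 0` there), the equation gives `W' = k² b ψ`.
Let `ψ a = 0` with `a ≥ 0`, where `b ≥ 0`, and suppose `ψ > 0` somewhere on `[a, ∞)`. As
`ψ → 0` at `+∞`, it attains a positive maximum at some `m > a`, so `W m = -ψ m · b' m < 0`. Let
`c` be the last point of `[a, m]` with `ψ c ≤ 0`: then `ψ' c ≥ 0`, so `W c ≥ 0`, while `W` is
monotone on `[c, m]` because `b ψ ≥ 0` there; a contradiction. Applied to `±ψ`, this makes `ψ`
vanish on `[a, ∞)`, and uniqueness for the linear equation `ψ'' = (q + k²) ψ` propagates this to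
all of `ℝ`. A zero at `a < 0` is handled by the reflection `y ↦ -y`, which preserves the only
properties of `b` used: `b 0 = 0` and `b' > 0`. For the shear flow `b' ≥ 1`, since the second
Gaussian is dominated by the first.
-/

open Topology

lemma exists_isMaxOn_Ici_of_tendsto_zero {f : ℝ → ℝ} {a x : ℝ} (hf : Continuous f)
    (hlim : Tendsto f atTop (𝓝 0)) (hx : a ≤ x) (hfx : 0 < f x) :
    ∃ m ∈ Ici a, IsMaxOn f (Ici a) m := by
  refine hf.continuousOn.exists_isMaxOn' isClosed_Ici hx ?_
  obtain ⟨R, hR⟩ := eventually_atTop.1 (hlim.eventually (gt_mem_nhds hfx))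
  rw [eventually_inf_principal]
  filter_upwards [(isCompact_Icc (a := a) (b := R)).compl_mem_cocompact] with y hy hay
  exact (hR y (le_of_lt (not_le.1 fun hyR => hy ⟨hay, hyR⟩))).le

lemma exists_nonpos_forall_pos_Ioc {f : ℝ → ℝ} {a b : ℝ} (hf : ContinuousOn f (Icc a b))
    (hab : a ≤ b) (ha : f a ≤ 0) : ∃ c ∈ Icc a b, f c ≤ 0 ∧ ∀ x ∈ Ioc c b, 0 < f x := by
  set S := Icc a b ∩ f ⁻¹' Iic 0
  have hS : IsClosed S := hf.preimage_isClosed_of_isClosed isClosed_Icc isClosed_Iic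
  have hbdd : BddAbove S := bddAbove_Icc.mono inter_subset_left
  obtain ⟨hc, hfc⟩ := hS.csSup_mem ⟨a, ⟨le_rfl, hab⟩, ha⟩ hbdd
  refine ⟨sSup S, hc, hfc, fun x hx => ?_⟩
  by_contra! hfx
  exact (le_csSup hbdd ⟨⟨hc.1.trans hx.1.le, hx.2⟩, hfx⟩).not_gt hx.1

lemma HasDerivAt.nonneg_of_isMinOn_Icc {f : ℝ → ℝ} {f' a b : ℝ} (hf : HasDerivAt f f' a)
    (hab : a < b) (hmin : IsMinOn f (Icc a b) a) : 0 ≤ f' := by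
  have h := hmin.localize.hasFDerivWithinAt_nonneg hf.hasFDerivAt.hasFDerivWithinAt
    (sub_mem_posTangentConeAt_of_segment_subset (segment_eq_Icc hab.le).subset)
  simp only [ContinuousLinearMap.toSpanSingleton_apply, smul_eq_mul] at h
  exact nonneg_of_mul_nonneg_right h (sub_pos.2 hab)

lemma continuous_of_continuousAt_of_eq_div {q f g : ℝ → ℝ} {x₀ : ℝ} (hq : ContinuousAt q x₀)
    (hf : Continuous f) (hg : Continuous g) (hg₀ : ∀ y, y ≠ x₀ → g y ≠ 0)
    (hqfg : ∀ y, y ≠ x₀ → q y = f y / g y) : Continuous q := by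
  refine continuous_iff_continuousAt.2 fun y => ?_
  rcases eq_or_ne y x₀ with rfl | hy
  · exact hq
  · exact (hf.continuousAt.div hg.continuousAt (hg₀ y hy)).congr
      ((eventually_ne_nhds hy).mono fun z hz => (hqfg z hz).symm)

lemma HasDerivAt.comp_neg {f : ℝ → ℝ} {f' y : ℝ} (hf : HasDerivAt f f' (-y)) :
    HasDerivAt (fun x => f (-x)) (-f') y := by
  have h := hf.comp y (hasDerivAt_neg y)
  rwa [mul_neg_one] at h

theorem eq_zero_of_hasDerivAt_of_eq_mul {g φ φ' φ'' : ℝ → ℝ} (hg : Continuous g)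
    (hφ : ∀ y, HasDerivAt φ (φ' y) y) (hφ' : ∀ y, HasDerivAt φ' (φ'' y) y)
    (heq : ∀ y, φ'' y = g y * φ y) {y₀ : ℝ} (h₀ : φ y₀ = 0) (h₁ : φ' y₀ = 0) : φ = 0 := by
  funext y
  obtain ⟨A, B, hy, hy₀⟩ : ∃ A B, y ∈ Ioo A B ∧ y₀ ∈ Ioo A B :=
    ⟨min y y₀ - 1, max y y₀ + 1, by constructor <;> constructor <;> grind⟩
  obtain ⟨C, hC⟩ := (isCompact_Icc (a := A) (b := B)).exists_bound_of_continuousOn hg.continuousOn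
  let v : ℝ → ℝ × ℝ → ℝ × ℝ := fun t u => (u.2, g t * u.1)
  have hv : ∀ t ∈ Ioo A B, LipschitzOnWith (max 1 C.toNNReal) (v t) univ := by
    intro t ht
    refine ((LipschitzWith.prod_snd.prodMk
      ((lipschitzWith_smul (g t)).comp LipschitzWith.prod_fst)).weaken ?_).lipschitzOnWith
    refine max_le_max le_rfl ?_
    rw [mul_one, ← NNReal.coe_le_coe, coe_nnnorm, Real.coe_toNNReal']
    exact (hC t (Ioo_subset_Icc_self ht)).trans (le_max_left _ _)
  have hsol : ∀ t ∈ Ioo A B, HasDerivAt (fun t => (φ t, φ' t)) (v t (φ t, φ' t)) t ∧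
      (φ t, φ' t) ∈ (univ : Set (ℝ × ℝ)) := fun t _ =>
    ⟨((hφ t).prodMk (hφ' t)).congr_deriv (by simp [v, heq]), trivial⟩
  have hzero : ∀ t ∈ Ioo A B, HasDerivAt (fun _ => (0 : ℝ × ℝ)) (v t 0) t ∧
      (0 : ℝ × ℝ) ∈ (univ : Set (ℝ × ℝ)) := fun t _ =>
    ⟨(hasDerivAt_const t _).congr_deriv (by simp [v, Prod.zero_eq_mk]), trivial⟩
  exact congrArg Prod.fst (ODE_solution_unique_of_mem_Ioo hv hy₀ hsol hzero (by simp [h₀, h₁]) hy)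

namespace Rayleigh

variable {b b' b'' q ψ ψ' ψ'' : ℝ → ℝ} {k : ℝ}

lemma hasDerivAt_wronskian {y : ℝ} (hb : HasDerivAt b (b' y) y) (hb' : HasDerivAt b' (b'' y) y)
    (hψ : HasDerivAt ψ (ψ' y) y) (hψ' : HasDerivAt ψ' (ψ'' y) y)
    (hqb : q y * b y = b'' y) (hψeq : ψ'' y - q y * ψ y = k ^ 2 * ψ y) :
    HasDerivAt (fun x => ψ' x * b x - ψ x * b' x) (k ^ 2 * b y * ψ y) y :=
  ((hψ'.mul hb).sub (hψ.mul hb')).congr_deriv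
    (by linear_combination b y * hψeq + ψ y * hqb)

theorem nonpos_of_eq_zero_of_le {a x : ℝ} (hb : ∀ y, HasDerivAt b (b' y) y)
    (hb' : ∀ y, HasDerivAt b' (b'' y) y) (hb_nonneg : ∀ y, a ≤ y → 0 ≤ b y)
    (hb'_pos : ∀ y, a ≤ y → 0 < b' y) (hqb : ∀ y, q y * b y = b'' y)
    (hψ : ∀ y, HasDerivAt ψ (ψ' y) y) (hψ' : ∀ y, HasDerivAt ψ' (ψ'' y) y)
    (hψeq : ∀ y, ψ'' y - q y * ψ y = k ^ 2 * ψ y) (hlim : Tendsto ψ atTop (𝓝 0))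
    (ha : ψ a = 0) (hx : a ≤ x) : ψ x ≤ 0 := by
  by_contra! hψx
  have hψc : Continuous ψ := continuous_iff_continuousAt.2 fun y => (hψ y).continuousAt
  obtain ⟨m, ham, hmax⟩ := exists_isMaxOn_Ici_of_tendsto_zero hψc hlim hx hψx
  have hψm : 0 < ψ m := hψx.trans_le (hmax hx)
  have ham' : a < m := lt_of_le_of_ne ham (by rintro rfl; linarith)
  have hψ'm : ψ' m = 0 := (hmax.isLocalMax (Ici_mem_nhds ham')).hasDerivAt_eq_zero (hψ m)
  obtain ⟨c, ⟨hac, hcm⟩, hψc0, hpos⟩ := exists_nonpos_forall_pos_Ioc hψc.continuousOn ham ha.le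
  have hcm' : c < m := lt_of_le_of_ne hcm (by rintro rfl; linarith)
  have hψ'c : 0 ≤ ψ' c := (hψ c).nonneg_of_isMinOn_Icc hcm' <| isMinOn_iff.2 fun x hx => by
    rcases hx.1.eq_or_lt with rfl | hcx
    · exact le_rfl
    · exact hψc0.trans (hpos x ⟨hcx, hx.2⟩).le
  have hW' (y : ℝ) := hasDerivAt_wronskian (hb y) (hb' y) (hψ y) (hψ' y) (hqb y) (hψeq y)
  have hW : MonotoneOn (fun x => ψ' x * b x - ψ x * b' x) (Icc c m) := by
    refine monotoneOn_of_hasDerivWithinAt_nonneg (convex_Icc c m)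
      (fun y _ => (hW' y).continuousAt.continuousWithinAt)
      (fun y _ => (hW' y).hasDerivWithinAt) ?_
    rw [interior_Icc]
    exact fun y hy => mul_nonneg (mul_nonneg (sq_nonneg k) (hb_nonneg y (hac.trans hy.1.le)))
      (hpos y ⟨hy.1, hy.2.le⟩).le
  have hWcm := hW ⟨le_rfl, hcm⟩ ⟨hcm, le_rfl⟩ hcm
  have h1 : 0 ≤ ψ' c * b c := mul_nonneg hψ'c (hb_nonneg c hac)
  have h2 : ψ c * b' c ≤ 0 := mul_nonpos_of_nonpos_of_nonneg hψc0 (hb'_pos c hac).le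
  have h3 : 0 < ψ m * b' m := mul_pos hψm (hb'_pos m ham)
  simp only [hψ'm, zero_mul] at hWcm
  linarith

theorem eq_zero_of_eq_zero_of_le {a x : ℝ} (hb : ∀ y, HasDerivAt b (b' y) y)
    (hb' : ∀ y, HasDerivAt b' (b'' y) y) (hb_nonneg : ∀ y, a ≤ y → 0 ≤ b y)
    (hb'_pos : ∀ y, a ≤ y → 0 < b' y) (hqb : ∀ y, q y * b y = b'' y)
    (hψ : ∀ y, HasDerivAt ψ (ψ' y) y) (hψ' : ∀ y, HasDerivAt ψ' (ψ'' y) y)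
    (hψeq : ∀ y, ψ'' y - q y * ψ y = k ^ 2 * ψ y) (hlim : Tendsto ψ atTop (𝓝 0))
    (ha : ψ a = 0) (hx : a ≤ x) : ψ x = 0 := by
  refine le_antisymm (nonpos_of_eq_zero_of_le hb hb' hb_nonneg hb'_pos hqb hψ hψ' hψeq
    hlim ha hx) (neg_nonpos.1 ?_)
  refine nonpos_of_eq_zero_of_le (ψ := fun y => -ψ y) (k := k) hb hb' hb_nonneg hb'_pos hqb
    (fun y => (hψ y).neg) (fun y => (hψ' y).neg) (ψ'' := fun y => -ψ'' y) (fun y => ?_)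
    (by simpa using hlim.neg) (by simp [ha]) hx
  linear_combination -hψeq y

theorem eq_zero_of_eq_zero_of_nonneg {a : ℝ} (ha₀ : 0 ≤ a)
    (hb : ∀ y, HasDerivAt b (b' y) y) (hb' : ∀ y, HasDerivAt b' (b'' y) y) (hb₀ : b 0 = 0)
    (hb'_pos : ∀ y, 0 < b' y) (hq : Continuous q) (hqb : ∀ y, q y * b y = b'' y)
    (hψ : ∀ y, HasDerivAt ψ (ψ' y) y) (hψ' : ∀ y, HasDerivAt ψ' (ψ'' y) y)
    (hψeq : ∀ y, ψ'' y - q y * ψ y = k ^ 2 * ψ y) (hlim : Tendsto ψ atTop (𝓝 0))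
    (ha : ψ a = 0) : ψ = 0 := by
  have hb_nonneg (y : ℝ) (hy : a ≤ y) : 0 ≤ b y :=
    hb₀ ▸ (strictMono_of_hasDerivAt_pos hb hb'_pos).monotone (ha₀.trans hy)
  have hvanish : ∀ x, a ≤ x → ψ x = 0 := fun x =>
    eq_zero_of_eq_zero_of_le hb hb' hb_nonneg (fun y _ => hb'_pos y) hqb hψ hψ' hψeq hlim ha
  have hψ'a : ψ' (a + 1) = 0 := (hψ (a + 1)).unique <|
    (hasDerivAt_const (a + 1) 0).congr_of_eventuallyEq <|
      eventually_of_mem (Ioi_mem_nhds (lt_add_one a)) fun x hx => hvanish x hx.le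
  exact eq_zero_of_hasDerivAt_of_eq_mul (g := fun y => q y + k ^ 2) (hq.add continuous_const)
    hψ hψ' (fun y => by linear_combination hψeq y) (hvanish (a + 1) (by linarith)) hψ'a

theorem eq_zero_of_eq_zero {a : ℝ}
    (hb : ∀ y, HasDerivAt b (b' y) y) (hb' : ∀ y, HasDerivAt b' (b'' y) y) (hb₀ : b 0 = 0)
    (hb'_pos : ∀ y, 0 < b' y) (hq : Continuous q) (hqb : ∀ y, q y * b y = b'' y)
    (hψ : ∀ y, HasDerivAt ψ (ψ' y) y) (hψ' : ∀ y, HasDerivAt ψ' (ψ'' y) y)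
    (hψeq : ∀ y, ψ'' y - q y * ψ y = k ^ 2 * ψ y) (hlim_top : Tendsto ψ atTop (𝓝 0))
    (hlim_bot : Tendsto ψ atBot (𝓝 0)) (ha : ψ a = 0) : ψ = 0 := by
  rcases le_total 0 a with ha₀ | ha₀
  · exact eq_zero_of_eq_zero_of_nonneg ha₀ hb hb' hb₀ hb'_pos hq hqb hψ hψ' hψeq
      hlim_top ha
  have hrefl := eq_zero_of_eq_zero_of_nonneg (neg_nonneg.2 ha₀)
    (b := fun y => -b (-y)) (b' := fun y => b' (-y)) (b'' := fun y => -b'' (-y))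
    (q := fun y => q (-y)) (ψ := fun y => ψ (-y)) (ψ' := fun y => -ψ' (-y))
    (ψ'' := fun y => ψ'' (-y)) (k := k)
    (fun y => (hb (-y)).comp_neg.fun_neg.congr_deriv (neg_neg _))
    (fun y => (hb' (-y)).comp_neg) (by simp [hb₀]) (fun y => hb'_pos (-y))
    (hq.comp continuous_neg) (fun y => by linear_combination -hqb (-y))
    (fun y => (hψ (-y)).comp_neg)
    (fun y => (hψ' (-y)).comp_neg.fun_neg.congr_deriv (neg_neg _))
    (fun y => hψeq (-y)) (hlim_bot.comp tendsto_neg_atTop_atBot) (by simpa using ha)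
  funext y
  simpa using congrFun hrefl (-y)

end Rayleigh

lemma hasDerivAt_integral_gaussian (c A y : ℝ) :
    HasDerivAt (fun u => ∫ z in (0 : ℝ)..u, c * exp (-z ^ 2 / A)) (c * exp (-y ^ 2 / A)) y := by
  have hf : Continuous fun z : ℝ => c * exp (-z ^ 2 / A) := by fun_prop
  exact intervalIntegral.integral_hasDerivAt_right (hf.intervalIntegrable _ _)
    (hf.stronglyMeasurableAtFilter _ _) hf.continuousAt

lemma hasDerivAt_gaussian (c A y : ℝ) :
    HasDerivAt (fun z => c * exp (-z ^ 2 / A)) (-(2 * y / A) * (c * exp (-y ^ 2 / A))) y := by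
  have h : HasDerivAt (fun z : ℝ => -z ^ 2 / A) (-(2 * y) / A) y := by
    simpa using (hasDerivAt_pow 2 y).neg.div_const A
  exact (h.exp.const_mul c).congr_deriv (by ring)

section ShearFlow

variable (ν M γ₀ γ₁ γ₂ t : ℝ)

def shearFlowDeriv (y : ℝ) : ℝ :=
  1 + M * (γ₀ ^ 2 / √(4 * ν * t + γ₀ ^ 2) * exp (-y ^ 2 / (4 * ν * t + γ₀ ^ 2))
    - γ₂ * (γ₀ ^ 2 * γ₁ ^ 3 / √(4 * ν * t + γ₀ ^ 2 * γ₁ ^ 2) *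
        exp (-y ^ 2 / (4 * ν * t + γ₀ ^ 2 * γ₁ ^ 2))))

def shearFlowDeriv2 (y : ℝ) : ℝ :=
  M * (-(2 * y / (4 * ν * t + γ₀ ^ 2)) * (γ₀ ^ 2 / √(4 * ν * t + γ₀ ^ 2) *
        exp (-y ^ 2 / (4 * ν * t + γ₀ ^ 2)))
    - γ₂ * (-(2 * y / (4 * ν * t + γ₀ ^ 2 * γ₁ ^ 2)) *
        (γ₀ ^ 2 * γ₁ ^ 3 / √(4 * ν * t + γ₀ ^ 2 * γ₁ ^ 2) *
          exp (-y ^ 2 / (4 * ν * t + γ₀ ^ 2 * γ₁ ^ 2)))))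

lemma hasDerivAt_shearFlow (y : ℝ) :
    HasDerivAt (shearFlow ν M γ₀ γ₁ γ₂ t) (shearFlowDeriv ν M γ₀ γ₁ γ₂ t y) y :=
  (hasDerivAt_id y).add (((hasDerivAt_integral_gaussian _ _ y).sub
    ((hasDerivAt_integral_gaussian _ _ y).const_mul γ₂)).const_mul M)

lemma hasDerivAt_shearFlowDeriv (y : ℝ) :
    HasDerivAt (shearFlowDeriv ν M γ₀ γ₁ γ₂ t) (shearFlowDeriv2 ν M γ₀ γ₁ γ₂ t y) y :=
  ((hasDerivAt_const y 1).add (((hasDerivAt_gaussian _ _ y).sub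
    ((hasDerivAt_gaussian _ _ y).const_mul γ₂)).const_mul M)).congr_deriv (zero_add _)

lemma shearFlow_zero : shearFlow ν M γ₀ γ₁ γ₂ t 0 = 0 := by
  simp [shearFlow]

lemma shearFlowDeriv2_zero : shearFlowDeriv2 ν M γ₀ γ₁ γ₂ t 0 = 0 := by
  simp [shearFlowDeriv2]

lemma continuous_shearFlowDeriv2 : Continuous (shearFlowDeriv2 ν M γ₀ γ₁ γ₂ t) := by
  unfold shearFlowDeriv2
  fun_prop

lemma deriv_deriv_shearFlow :
    deriv (deriv (shearFlow ν M γ₀ γ₁ γ₂ t)) = shearFlowDeriv2 ν M γ₀ γ₁ γ₂ t := by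
  have hd : deriv (shearFlow ν M γ₀ γ₁ γ₂ t) = shearFlowDeriv ν M γ₀ γ₁ γ₂ t :=
    funext fun y => (hasDerivAt_shearFlow ν M γ₀ γ₁ γ₂ t y).deriv
  exact hd ▸ funext fun y => (hasDerivAt_shearFlowDeriv ν M γ₀ γ₁ γ₂ t y).deriv

variable {ν M γ₀ γ₁ γ₂ t}

lemma one_le_shearFlowDeriv (hνt : 0 ≤ ν * t) (hM : 0 ≤ M) (hγ₀ : 0 < γ₀) (hγ₁ : 0 < γ₁)
    (hγ₁' : γ₁ ≤ 1) (hγ₂ : γ₂ ≤ 1) (y : ℝ) : 1 ≤ shearFlowDeriv ν M γ₀ γ₁ γ₂ t y := by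
  set A₁ := 4 * ν * t + γ₀ ^ 2
  set A₂ := 4 * ν * t + γ₀ ^ 2 * γ₁ ^ 2
  have hγ₁sq : γ₁ ^ 2 ≤ 1 := pow_le_one₀ hγ₁.le hγ₁'
  have hA₂ : 0 < A₂ := by have := mul_pos (pow_pos hγ₀ 2) (pow_pos hγ₁ 2); linarith
  have hA : A₂ ≤ A₁ := add_le_add_right (mul_le_of_le_one_right (sq_nonneg γ₀) hγ₁sq) _
  have hamp : γ₀ ^ 2 * γ₁ ^ 3 / √A₂ ≤ γ₀ ^ 2 / √A₁ := by
    have hsqrt : γ₁ ^ 3 * √A₁ ≤ √A₂ :=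
      calc γ₁ ^ 3 * √A₁ ≤ γ₁ * √A₁ := by
            gcongr; exact pow_le_of_le_one hγ₁.le hγ₁' (by norm_num)
        _ = √(γ₁ ^ 2 * A₁) := by rw [sqrt_mul (sq_nonneg _), sqrt_sq hγ₁.le]
        _ ≤ √A₂ := sqrt_le_sqrt (by nlinarith [mul_le_mul_of_nonneg_right hγ₁sq hνt])
    rw [div_le_div_iff₀ (sqrt_pos.2 hA₂) (sqrt_pos.2 (hA₂.trans_le hA))]
    nlinarith [sq_nonneg γ₀]
  have hprofile : exp (-y ^ 2 / A₂) ≤ exp (-y ^ 2 / A₁) := by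
    rw [exp_le_exp, neg_div, neg_div, neg_le_neg_iff]
    exact div_le_div_of_nonneg_left (sq_nonneg y) hA₂ hA
  have hnarrow : 0 ≤ γ₀ ^ 2 * γ₁ ^ 3 / √A₂ * exp (-y ^ 2 / A₂) := by positivity
  have hdom : γ₂ * (γ₀ ^ 2 * γ₁ ^ 3 / √A₂ * exp (-y ^ 2 / A₂)) ≤
      γ₀ ^ 2 / √A₁ * exp (-y ^ 2 / A₁) :=
    (mul_le_of_le_one_left hnarrow hγ₂).trans
      (mul_le_mul hamp hprofile (exp_pos _).le (by positivity))
  exact le_add_of_nonneg_right (mul_nonneg hM (sub_nonneg.2 hdom))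

end ShearFlow

theorem neutral_mode_no_zeros_general (ν M γ₀ γ₁ γ₂ t : ℝ) (hν : 0 < ν) (hM : 0 < M)
    (hγ₀ : γ₀ ∈ Set.Ioo (0:ℝ) 1) (hγ₁ : γ₁ ∈ Set.Ioo (0:ℝ) 1)
    (hγ₂ : γ₂ ∈ Set.Ioo (0:ℝ) 1) (ht : 0 ≤ t)
    (q : ℝ → ℝ) (hq0 : ContinuousAt q 0)
    (hq : ∀ y : ℝ, y ≠ 0 →
      q y = deriv (deriv (shearFlow ν M γ₀ γ₁ γ₂ t)) y / shearFlow ν M γ₀ γ₁ γ₂ t y)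
    (k : ℝ)
    (φ : ℝ → ℝ) (hφ : ContDiff ℝ 2 φ)
    (hlim_top : Tendsto φ atTop (nhds 0)) (hlim_bot : Tendsto φ atBot (nhds 0))
    (heq : ∀ y : ℝ, deriv (deriv φ) y - q y * φ y = k^2 * φ y)
    (y₀ : ℝ) (hzero : φ y₀ = 0) :
    ∀ y : ℝ, φ y = 0 := by
  set b := shearFlow ν M γ₀ γ₁ γ₂ t
  have hb := hasDerivAt_shearFlow ν M γ₀ γ₁ γ₂ t
  have hb'_pos (y : ℝ) : 0 < shearFlowDeriv ν M γ₀ γ₁ γ₂ t y :=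
    one_pos.trans_le <| one_le_shearFlowDeriv (mul_nonneg hν.le ht) hM.le hγ₀.1 hγ₁.1 hγ₁.2.le
      hγ₂.2.le y
  have hb₀ : b 0 = 0 := shearFlow_zero ν M γ₀ γ₁ γ₂ t
  have hb_ne (y : ℝ) (hy : y ≠ 0) : b y ≠ 0 :=
    hb₀ ▸ (strictMono_of_hasDerivAt_pos hb hb'_pos).injective.ne hy
  rw [deriv_deriv_shearFlow] at hq
  have hqb (y : ℝ) : q y * b y = shearFlowDeriv2 ν M γ₀ γ₁ γ₂ t y := by
    rcases eq_or_ne y 0 with rfl | hy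
    · rw [hb₀, shearFlowDeriv2_zero, mul_zero]
    · rw [hq y hy, div_mul_cancel₀ _ (hb_ne y hy)]
  have hqc : Continuous q := continuous_of_continuousAt_of_eq_div hq0
    (continuous_shearFlowDeriv2 ν M γ₀ γ₁ γ₂ t) (continuous_iff_continuousAt.2 fun y =>
      (hb y).continuousAt) hb_ne hq
  have hφ' : Differentiable ℝ (deriv φ) := by
    simpa using hφ.differentiable_iteratedDeriv 1 (by norm_num)
  exact congrFun <| Rayleigh.eq_zero_of_eq_zero hb
    (hasDerivAt_shearFlowDeriv ν M γ₀ γ₁ γ₂ t) hb₀ hb'_pos hqc hqb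
    (fun y => (hφ.differentiable (by norm_num) y).hasDerivAt) (fun y => (hφ' y).hasDerivAt) heq
    hlim_top hlim_bot hzero

/-- no-zeros part of Lemma 2.1.
Fix parameters and let `b = b(t,·)` be the shear flow at time `t`, and let `q` be the
continuous extension of `b''/b`. If `φ` is a `C²` solution of `φ'' − q·φ = k²·φ`
(`k ≠ 0`) with `φ, φ' ∈ L²` and `φ(y) → 0` as `y → ±∞`, and `φ(y₀) = 0` for some `y₀`,
then `φ ≡ 0`. -/
theorem neutral_mode_no_zeros (ν M γ₀ γ₁ γ₂ t : ℝ) (hν : 0 < ν) (hM : 0 < M)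
    (hγ₀ : γ₀ ∈ Set.Ioo (0:ℝ) 1) (hγ₁ : γ₁ ∈ Set.Ioo (0:ℝ) 1)
    (hγ₂ : γ₂ ∈ Set.Ioo (0:ℝ) 1) (ht : 0 ≤ t)
    (q : ℝ → ℝ) (hq0 : ContinuousAt q 0)
    (hq : ∀ y : ℝ, y ≠ 0 →
      q y = deriv (deriv (shearFlow ν M γ₀ γ₁ γ₂ t)) y / shearFlow ν M γ₀ γ₁ γ₂ t y)
    (k : ℝ) (hk : k ≠ 0)
    (φ : ℝ → ℝ) (hφ : ContDiff ℝ 2 φ)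
    (hφL2 : MemLp φ 2 (volume : Measure ℝ))
    (hφ'L2 : MemLp (deriv φ) 2 (volume : Measure ℝ))
    (hlim_top : Tendsto φ atTop (nhds 0)) (hlim_bot : Tendsto φ atBot (nhds 0))
    (heq : ∀ y : ℝ, deriv (deriv φ) y - q y * φ y = k^2 * φ y)
    (y₀ : ℝ) (hzero : φ y₀ = 0) :
    ∀ y : ℝ, φ y = 0 :=
  neutral_mode_no_zeros_general ν M γ₀ γ₁ γ₂ t hν hM hγ₀ hγ₁ hγ₂ ht q hq0 hq k φ hφ hlim_top
    hlim_bot heq y₀ hzero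
end
end

section
/- Let b : ℝ → ℝ be a smooth odd function with b(y) ≠ 0 for y ≠ 0, let k ∈ ℝ, let c_i ∈ ℝ with c_i ≠ 0, and set c = i·c_i. Suppose φ : ℝ → ℂ is twice continuously differentiable and solves the homogeneous Rayleigh equation (b(y) − c)·(φ''(y) − k²·φ(y)) = b''(y)·φ(y) for all y ∈ ℝ, with initial conditions φ(0) = i·c_i and φ'(0) = b'(0). Then φ(y) = −conj(φ(−y)) for every y ∈ ℝ. Consequently, if φ(y) ≠ 0 for all y ∈ [−R, R], then Im ∫_{−R}^{R} φ(y)^{−2} dy = 0 for every R > 0. -/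
open MeasureTheory Real Filter Set
open scoped ContDiff

private lemma lipAux (c : ℂ) (C : NNReal) (hc : ‖c‖₊ ≤ C) (h1 : 1 ≤ C) :
    LipschitzWith C (fun p : ℂ × ℂ => (p.2, c * p.1)) := by
  have hs : LipschitzWith (‖c‖₊ * 1) (fun p : ℂ × ℂ => c * p.1) := by
    have := (lipschitzWith_smul (β := ℂ) c).comp (LipschitzWith.prod_fst (α := ℂ) (β := ℂ))
    simpa [smul_eq_mul, Function.comp_def] using this
  have := (LipschitzWith.prod_snd (α := ℂ) (β := ℂ)).prodMk hs
  exact this.weaken (by simp [hc, h1])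

private lemma conjDeriv (f : ℝ → ℂ) (f' : ℂ) (x : ℝ) (h : HasDerivAt f f' x) :
    HasDerivAt (fun y => (starRingEnd ℂ) (f y)) ((starRingEnd ℂ) f') x := by
  have := Complex.conjCLE.toContinuousLinearMap.hasFDerivAt (x := f x) |>.comp_hasDerivAt x h
  simpa [Function.comp_def] using this

private lemma negDeriv (f : ℝ → ℂ) (f' : ℂ) (x : ℝ) (h : HasDerivAt f f' (-x)) :
    HasDerivAt (fun y => f (-y)) (-f') x := by
  have := h.scomp x (hasDerivAt_neg x)
  simpa [Function.comp_def] using this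

/-- symmetry identity (3.2) (eq-psipm2) in Section 3 of the paper.
Let `b` be a smooth odd shear flow, nonvanishing away from `0`, let `c = i·c_i` with
`c_i ≠ 0`, and let `φ` be a `C²` solution of the homogeneous Rayleigh equation
`(b − c)·(φ'' − k²φ) = b''·φ` with `φ(0) = i·c_i`, `φ'(0) = b'(0)`. Then
`φ(y) = −conj(φ(−y))` for all `y`; consequently, if `φ ≠ 0` on `[−R,R]` then
`Im ∫_{−R}^{R} φ(y)⁻² dy = 0`. -/
theorem rayleigh_solution_odd_symmetry (b : ℝ → ℝ) (hb : ContDiff ℝ (⊤ : ℕ∞) b)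
    (hodd : ∀ y : ℝ, b (-y) = -(b y)) (hbne : ∀ y : ℝ, y ≠ 0 → b y ≠ 0)
    (k : ℝ) (ci : ℝ) (hci : ci ≠ 0)
    (φ : ℝ → ℂ) (hφ : ContDiff ℝ 2 φ)
    (heq : ∀ y : ℝ,
      ((b y : ℂ) - Complex.I * (ci : ℂ)) * (deriv (deriv φ) y - (k : ℂ)^2 * φ y)
        = ((deriv (deriv b) y : ℝ) : ℂ) * φ y)
    (h0 : φ 0 = Complex.I * (ci : ℂ))
    (h0' : deriv φ 0 = ((deriv b 0 : ℝ) : ℂ)) :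
    (∀ y : ℝ, φ y = -(starRingEnd ℂ) (φ (-y))) ∧
    (∀ R : ℝ, 0 < R → (∀ y ∈ Set.Icc (-R) R, φ y ≠ 0) →
      (∫ y in (-R)..R, ((φ y)^2)⁻¹).im = 0) := by
  -- derivatives of b
  have hbodd' : ∀ y, deriv b (-y) = deriv b y := by
    intro y
    have h : deriv (fun x => b (-x)) y = deriv (fun x => -(b x)) y := by
      congr 1; ext x; rw [hodd]
    rw [deriv_comp_neg, deriv.fun_neg] at h
    exact neg_injective h
  have hb2odd : ∀ y, deriv (deriv b) (-y) = -(deriv (deriv b) y) := by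
    intro y
    have h : deriv (fun x => deriv b (-x)) y = deriv (deriv b) y := by
      congr 1; ext x; rw [hbodd']
    rw [deriv_comp_neg] at h
    linarith
  have hden : ∀ y : ℝ, ((b y : ℂ) - Complex.I * ci) ≠ 0 := by
    intro y h
    apply hci
    have := congrArg Complex.im h
    simpa using this
  set q : ℝ → ℂ := fun y =>
    (k : ℂ)^2 + ((deriv (deriv b) y : ℝ) : ℂ) / ((b y : ℂ) - Complex.I * ci) with hqdef
  have hq : ∀ y, deriv (deriv φ) y = q y * φ y := by
    intro y
    have h := heq y
    rw [hqdef]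
    field_simp [hden y]
    linear_combination h
  -- regularity of φ
  have hφd : Differentiable ℝ φ := hφ.differentiable (by norm_num)
  have hφ1 : ContDiff ℝ 1 (deriv φ) := by
    have := (contDiff_succ_iff_deriv (n := 1)).mp (by norm_num at hφ ⊢; exact hφ)
    exact this.2.2
  have hd2 : ∀ y, HasDerivAt (deriv φ) (deriv (deriv φ) y) y :=
    fun y => ((hφ1.differentiable (by norm_num)) y).hasDerivAt
  -- continuity of q
  have hbC : ContDiff ℝ (∞ : WithTop ℕ∞) b := hb.of_le (by simp)
  have hb1 : ContDiff ℝ (∞ : WithTop ℕ∞) (deriv b) := (contDiff_infty_iff_deriv.mp hbC).2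
  have hb2c : Continuous (deriv (deriv b)) := ((contDiff_infty_iff_deriv.mp hb1).2).continuous
  have hcontq : Continuous q := by
    apply continuous_const.add
    exact (Complex.continuous_ofReal.comp hb2c).div
      ((Complex.continuous_ofReal.comp hb.continuous).sub continuous_const) hden
  have hqconj : ∀ y, (starRingEnd ℂ) (q (-y)) = q y := by
    intro y
    rw [hqdef]
    simp only [hodd y, hb2odd y, map_add, map_pow, map_div₀, map_sub, map_mul,
      Complex.conj_ofReal, Complex.conj_I, Complex.ofReal_neg, map_neg]
    rw [show -((b y : ℂ)) - -Complex.I * ci = -((b y : ℂ) - Complex.I * ci) by ring,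
      neg_div_neg_eq]
  -- symmetry via ODE uniqueness
  have hsym : ∀ y : ℝ, φ y = -(starRingEnd ℂ) (φ (-y)) := by
    intro y₀
    set R : ℝ := |y₀| + 1 with hRdef
    have hRpos : (0:ℝ) < R := by positivity
    set pr : ℝ → ℝ := fun t => min R (max (-R) t) with hprdef
    have hprmem : ∀ t, pr t ∈ Icc (-R) R := by
      intro t
      exact ⟨le_min (by linarith) (le_max_left _ _), min_le_left _ _⟩
    have hpr_eq : ∀ t ∈ Icc (-R) R, pr t = t := by
      intro t ht
      simp [hprdef, max_eq_right ht.1, min_eq_right ht.2]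
    obtain ⟨M, hM⟩ := (isCompact_Icc (a := -R) (b := R)).exists_bound_of_continuousOn
      hcontq.continuousOn
    set K : NNReal := max 1 (Real.toNNReal M) with hKdef
    set v : ℝ → ℂ × ℂ → ℂ × ℂ := fun t p => (p.2, q (pr t) * p.1) with hvdef
    have hlip : ∀ t, LipschitzWith K (v t) := by
      intro t
      apply lipAux
      · have h1 : ‖q (pr t)‖ ≤ M := hM _ (hprmem t)
        have h2 : ‖q (pr t)‖₊ ≤ Real.toNNReal M := by
          rw [← NNReal.coe_le_coe]
          simp only [coe_nnnorm, Real.coe_toNNReal', le_max_iff]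
          exact Or.inl h1
        exact h2.trans (le_max_right _ _)
      · exact le_max_left _ _
    set F : ℝ → ℂ × ℂ := fun t => (φ t, deriv φ t) with hFdef
    set G : ℝ → ℂ × ℂ :=
      fun t => (-(starRingEnd ℂ) (φ (-t)), (starRingEnd ℂ) (deriv φ (-t))) with hGdef
    have hF' : ∀ t ∈ Ioo (-R) R, HasDerivAt F (v t (F t)) t := by
      intro t ht
      have h1 : HasDerivAt φ (deriv φ t) t := (hφd t).hasDerivAt
      have := h1.prodMk (hd2 t)
      simpa [hFdef, hvdef, hpr_eq t (Ioo_subset_Icc_self ht), hq t] using this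
    have hG' : ∀ t ∈ Ioo (-R) R, HasDerivAt G (v t (G t)) t := by
      intro t ht
      have a1 : HasDerivAt (fun s => φ (-s)) (-(deriv φ (-t))) t :=
        negDeriv φ _ t (hφd (-t)).hasDerivAt
      have a2 : HasDerivAt (fun s => -(starRingEnd ℂ) (φ (-s)))
          ((starRingEnd ℂ) (deriv φ (-t))) t := by
        have := (conjDeriv _ _ t a1).neg
        simpa [Pi.neg_def] using this
      have b1 : HasDerivAt (fun s => deriv φ (-s)) (-(deriv (deriv φ) (-t))) t :=
        negDeriv (deriv φ) _ t (hd2 (-t))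
      have b2 : HasDerivAt (fun s => (starRingEnd ℂ) (deriv φ (-s)))
          (-((starRingEnd ℂ) (deriv (deriv φ) (-t)))) t := by
        have := conjDeriv _ _ t b1
        simpa using this
      have hkey : -((starRingEnd ℂ) (deriv (deriv φ) (-t)))
          = q (pr t) * (-(starRingEnd ℂ) (φ (-t))) := by
        rw [hq (-t), map_mul, hqconj t, hpr_eq t (Ioo_subset_Icc_self ht)]
        ring
      have := a2.prodMk (hkey ▸ b2)
      simpa [hGdef, hvdef] using this
    have hF0 : F 0 = G 0 := by
      simp only [hFdef, hGdef, neg_zero, h0, h0', Prod.mk.injEq]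
      constructor
      · simp [map_mul, Complex.conj_I, Complex.conj_ofReal]
      · simp [Complex.conj_ofReal]
    have hFc : ContinuousOn F (Icc (-R) R) :=
      (hφ.continuous.prodMk (hφ1.continuous)).continuousOn
    have hGc : ContinuousOn G (Icc (-R) R) := by
      apply Continuous.continuousOn
      exact ((Complex.continuous_conj.comp (hφ.continuous.comp continuous_neg)).neg).prodMk
        (Complex.continuous_conj.comp ((hφ1.continuous).comp continuous_neg))
    have heqFG : EqOn F G (Icc (-R) R) :=
      ODE_solution_unique_of_mem_Icc (v := v) (K := K) (s := fun _ => (univ : Set (ℂ × ℂ)))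
        (fun t _ => (hlip t).lipschitzOnWith)
        (by constructor <;> [linarith [abs_nonneg y₀]; linarith [abs_nonneg y₀]])
        hFc hF' (fun _ _ => trivial) hGc hG' (fun _ _ => trivial) hF0
    have hy₀ : y₀ ∈ Icc (-R) R := by
      constructor <;> [linarith [neg_abs_le y₀]; linarith [le_abs_self y₀]]
    have := heqFG hy₀
    exact congrArg Prod.fst this
  refine ⟨hsym, ?_⟩
  intro R hR hne
  set f : ℝ → ℂ := fun y => ((φ y)^2)⁻¹ with hfdef
  have key : ∀ y, f (-y) = (starRingEnd ℂ) (f y) := by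
    intro y
    have h := hsym (-y)
    rw [neg_neg] at h
    simp only [hfdef, h]
    rw [neg_sq, ← map_pow, ← map_inv₀]
  have h1 : (∫ y in (-R)..R, f y) = ∫ y in (-R)..R, f (-y) := by
    rw [intervalIntegral.integral_comp_neg]
    simp
  have h2 : (∫ y in (-R)..R, (starRingEnd ℂ) (f y))
      = (starRingEnd ℂ) (∫ y in (-R)..R, f y) := by
    rw [intervalIntegral, intervalIntegral, map_sub, ← integral_conj, ← integral_conj]
  have h3 : (∫ y in (-R)..R, f y) = (starRingEnd ℂ) (∫ y in (-R)..R, f y) :=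
    calc (∫ y in (-R)..R, f y) = ∫ y in (-R)..R, f (-y) := h1
      _ = ∫ y in (-R)..R, (starRingEnd ℂ) (f y) := by simp only [key]
      _ = (starRingEnd ℂ) (∫ y in (-R)..R, f y) := h2
  have := congrArg Complex.im h3
  simp only [Complex.conj_im] at this
  linarith
end
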